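/- Let π be a probability measure on [0,1]^d and F a triangular transform of π such that F is Hölder continuous with exponent κ ∈ (0,1] and there is M < ∞ such that for every i and every fixed x_{1:i−1} the map x_i ↦ F_i(x_{1:i−1}, x_i) is Lipschitz with constant M. Set β = ⌈κ^{-1}⌉ and d̃ = ∑_{i=0}^{d−1} β^i. Then there exists a constant c > 0 such that for every integer L ≥ 2 and every box B = ∏_{i=1}^d [a_i, b_i] with 0 ≤ a_i < b_i < 1, the image F(∂B) of the topological boundary of B intersects at most c L^{d̃−1} of the L^{d̃} cells of the partition of [0,1)^d into congruent axis-parallel hyperrectangles whose i-th side length equals L^{-β^{d−i}} (for i = 1, …, d). -/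

import Mathlib

open MeasureTheory ProbabilityTheory Filter Set
open scoped ENNReal NNReal

noncomputable section

/-- The closed unit cube `[0,1]^d` in `ℝ^d`. -/
def cubeIcc (d : ℕ) : Set (Fin d → ℝ) := Set.univ.pi fun _ => Set.Icc (0 : ℝ) 1

/-- The half-open unit cube `[0,1)^d` in `ℝ^d`. -/
def cubeIco (d : ℕ) : Set (Fin d → ℝ) := Set.univ.pi fun _ => Set.Ico (0 : ℝ) 1

/-- `IsGoodBox a b` : the box `∏ᵢ [aᵢ, bᵢ]` satisfies `0 ≤ aᵢ < bᵢ < 1` for all `i`. -/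
def IsGoodBox {d : ℕ} (a b : Fin d → ℝ) : Prop := ∀ i, 0 ≤ a i ∧ a i < b i ∧ b i < 1

/-- The closed box `∏ᵢ [aᵢ, bᵢ]` in `ℝ^d`. -/
def clBox {d : ℕ} (a b : Fin d → ℝ) : Set (Fin d → ℝ) :=
  Set.univ.pi fun i => Set.Icc (a i) (b i)

/-- The extreme norm distance `‖μ − ν‖_E` between two measures on `ℝ^d`:
the supremum over boxes `∏ᵢ [aᵢ, bᵢ]` with `0 ≤ aᵢ < bᵢ < 1` of `|μ(B) − ν(B)|`. -/
def extDist {d : ℕ} (μ ν : Measure (Fin d → ℝ)) : ℝ :=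
  ⨆ p : {q : (Fin d → ℝ) × (Fin d → ℝ) // IsGoodBox q.1 q.2},
    |(μ (clBox p.1.1 p.1.2)).toReal - (ν (clBox p.1.1 p.1.2)).toReal|

/-- A triangular (Rosenblatt-type) transform `F` of a probability measure `π` on `[0,1]^d`:
the `i`-th component of `F x` depends only on `x_1, …, x_i`, is strictly increasing in `x_i`,
`F` restricts to a bijection of `[0,1)^d` onto itself, and the pushforward of `π` by `F`
is Lebesgue measure on the unit cube. -/
structure IsTriangular {d : ℕ} (π : Measure (Fin d → ℝ))
    (F : (Fin d → ℝ) → (Fin d → ℝ)) : Prop where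
  measurable : Measurable F
  dep : ∀ (i : Fin d) (x y : Fin d → ℝ), (∀ j, j ≤ i → x j = y j) → F x i = F y i
  strictMono : ∀ (i : Fin d), ∀ x ∈ cubeIcc d,
    StrictMonoOn (fun s : ℝ => F (Function.update x i s) i) (Set.Icc (0 : ℝ) 1)
  bijOn : Set.BijOn F (cubeIco d) (cubeIco d)
  map_eq : π.map F = volume.restrict (cubeIco d)

/-- The (half-open) cell with multi-index `cc` of the anisotropic partition of `[0,1)^d`
whose `i`-th side length is `L^{-β^{d−1−i}}` (with `i : Fin d` zero-based). -/
def anisoCell (d : ℕ) (β L : ℕ) (cc : Fin d → ℕ) : Set (Fin d → ℝ) :=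
  Set.univ.pi fun i =>
    Set.Ico ((cc i : ℝ) * ((L : ℝ) ^ (β ^ (d - 1 - (i : ℕ))))⁻¹)
      (((cc i : ℝ) + 1) * ((L : ℝ) ^ (β ^ (d - 1 - (i : ℕ))))⁻¹)

/-!
Every cell met by `F(∂B)` is met by the image of one of the `2d` faces `B ∩ {x_j = t}`, and the
image of a face is counted by induction on `d`.

If `j = 0`, the first component of `F` is constant on the face, so all the cells met lie in one
slab orthogonal to the first axis, and there are at most `L^{d̃ - β^{d-1}}` of them.

Otherwise cut the face into `N = L^{β^{d-1}}` slices of width `1/N` in `x_0`. On the `n`-th slice,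
by Hölder continuity, the last `d - 1` components of `F` are within `C N^{-κ} ≤ C L^{-β^{d-2}}` of
the triangular map `x' ↦ F(n/N, x')_{1:}` in dimension `d - 1`. Every cell side along these axes is
at least `L^{-β^{d-2}}`, so the cell indices differ by at most `⌈C⌉` along each axis from those of a
cell met by the lower-dimensional map. Along the first axis, `F_0` is nondecreasing in `x_0`, so
consecutive slices share at most one cell index, and over all `N` slices there are at most `2N`
pairs of a slice and a first index. This multiplies the count by `O(N)`, which raises the exponent
from `d̃_{d-1} - 1` to `d̃_d - 1`.
-/

lemma Set.ncard_image2_le {α β γ : Type*} {f : α → β → γ} {s : Set α} {t : Set β}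
    (hs : s.Finite) (ht : t.Finite) : (image2 f s t).ncard ≤ s.ncard * t.ncard := by
  rw [← image_uncurry_prod]
  exact (ncard_image_le (hs.prod ht)).trans_eq ncard_prod

lemma Nat.floor_le_floor_add_ceil {R : Type*} [Field R] [LinearOrder R] [IsStrictOrderedRing R]
    [FloorSemiring R] {a b c : R} (h : a ≤ b + c) : ⌊a⌋₊ ≤ ⌊b⌋₊ + ⌈c⌉₊ := by
  rcases lt_or_ge a 0 with ha | ha
  · simp [Nat.floor_of_nonpos ha.le]
  · have : (⌊a⌋₊ : R) < ⌊b⌋₊ + ⌈c⌉₊ + 1 := by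
      linarith [Nat.floor_le ha, Nat.lt_floor_add_one b, Nat.le_ceil c]
    exact Nat.lt_add_one_iff.mp (by exact_mod_cast this)

lemma sum_range_succ_sub_add_one {m : ℕ → ℕ} {N : ℕ} (hm : ∀ n < N, m n ≤ m (n + 1)) :
    ∑ n ∈ Finset.range N, (m (n + 1) + 1 - m n) + m 0 = m N + N := by
  induction N with
  | zero => simp
  | succ N ih =>
    rw [Finset.sum_range_succ, add_right_comm, ih fun n hn => hm n (by omega)]
    have := hm N (by omega)
    omega

lemma ncard_le_of_subset_biUnion_image2_Icc {β γ : Type*} {f : ℕ → β → γ} {Y : Set γ}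
    {m : ℕ → ℕ} {B : ℕ → Set β} {N K : ℕ}
    (hY : Y ⊆ ⋃ n ∈ Finset.range N, image2 f (Icc (m n) (m (n + 1))) (B n))
    (hm : ∀ n < N, m n ≤ m (n + 1)) (hmN : m N ≤ N) (hB : ∀ n < N, (B n).Finite)
    (hBK : ∀ n < N, (B n).ncard ≤ K) : Y.ncard ≤ 2 * N * K := by
  -- the interval lengths telescope to `m N - m 0 + N ≤ 2 N`
  have hsum := sum_range_succ_sub_add_one hm
  calc Y.ncard ≤ (⋃ n ∈ Finset.range N, image2 f (Icc (m n) (m (n + 1))) (B n)).ncard :=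
        ncard_le_ncard hY (Finite.biUnion (Finset.finite_toSet _) fun n hn =>
          (finite_Icc _ _).image2 _ (hB n (Finset.mem_range.1 hn)))
    _ ≤ ∑ n ∈ Finset.range N, (image2 f (Icc (m n) (m (n + 1))) (B n)).ncard :=
        Finset.set_ncard_biUnion_le _ _
    _ ≤ ∑ n ∈ Finset.range N, (m (n + 1) + 1 - m n) * K := by
        refine Finset.sum_le_sum fun n hn => (ncard_image2_le (finite_Icc _ _)
          (hB n (Finset.mem_range.1 hn))).trans ?_
        rw [← Finset.coe_Icc, ncard_coe_finset, Nat.card_Icc]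
        exact Nat.mul_le_mul le_rfl (hBK n (Finset.mem_range.1 hn))
    _ = (∑ n ∈ Finset.range N, (m (n + 1) + 1 - m n)) * K := (Finset.sum_mul ..).symm
    _ ≤ 2 * N * K := by gcongr; omega

lemma natCast_div_mem_Ico {n N : ℕ} (h : n < N) : (n : ℝ) / N ∈ Ico 0 1 :=
  ⟨by positivity,
    (div_lt_one (by exact_mod_cast (Nat.zero_le n).trans_lt h)).2 (by exact_mod_cast h)⟩

lemma natCast_div_mem_Icc {n N : ℕ} (h : n ≤ N) : (n : ℝ) / N ∈ Icc 0 1 :=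
  ⟨by positivity, div_le_one_of_le₀ (by exact_mod_cast h) (by positivity)⟩

lemma one_le_of_one_le_natCast_mul {β : ℕ} {κ : ℝ} (h : 1 ≤ β * κ) : 1 ≤ β := by
  rcases Nat.eq_zero_or_pos β with rfl | hβ
  · simp at h; linarith
  · exact hβ

lemma pos_of_one_le_natCast_mul {β : ℕ} {κ : ℝ} (h : 1 ≤ β * κ) : 0 < κ := by
  by_contra! hκ
  nlinarith [(Nat.cast_nonneg β : (0 : ℝ) ≤ β)]

section FinTuple

variable {E : Type*} [SeminormedAddGroup E] {n : ℕ}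

lemma Fin.tail_sub {α : Type*} [Sub α] (a b : Fin (n + 1) → α) :
    Fin.tail (a - b) = Fin.tail a - Fin.tail b :=
  rfl

lemma Fin.norm_le_of_norm_zero_le_of_norm_tail_le {v : Fin (n + 1) → E} {r : ℝ}
    (h₀ : ‖v 0‖ ≤ r) (ht : ‖Fin.tail v‖ ≤ r) : ‖v‖ ≤ r := by
  refine (pi_norm_le_iff_of_nonneg ((norm_nonneg _).trans h₀)).2 fun i => ?_
  cases i using Fin.cases with
  | zero => exact h₀
  | succ i => exact (norm_le_pi_norm (Fin.tail v) i).trans ht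

lemma Fin.norm_tail_le (v : Fin (n + 1) → E) : ‖Fin.tail v‖ ≤ ‖v‖ :=
  (pi_norm_le_iff_of_nonneg (norm_nonneg v)).2 fun i => norm_le_pi_norm v i.succ

lemma Fin.norm_cons_sub_cons (s : E) (x y : Fin n → E) :
    ‖(Fin.cons s x : Fin (n + 1) → E) - Fin.cons s y‖ = ‖x - y‖ :=
  le_antisymm (Fin.norm_le_of_norm_zero_le_of_norm_tail_le (by simp) (by simp [Fin.tail_sub]))
    (calc ‖x - y‖ = ‖Fin.tail ((Fin.cons s x : Fin (n + 1) → E) - Fin.cons s y)‖ := by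
            rw [Fin.tail_sub, Fin.tail_cons, Fin.tail_cons]
      _ ≤ _ := Fin.norm_tail_le _)

end FinTuple

def natNbhd {ι : Type*} (w : ℕ) (T : Set (ι → ℕ)) : Set (ι → ℕ) :=
  {c | ∃ c' ∈ T, ∀ i, c i ≤ c' i + w ∧ c' i ≤ c i + w}

section NatNbhd

variable {ι : Type*} (w : ℕ) {T : Set (ι → ℕ)}

lemma natNbhd_subset_image (T : Set (ι → ℕ)) : natNbhd w T ⊆
    (fun p : (ι → ℕ) × (ι → Fin (2 * w + 1)) => fun i => p.1 i + p.2 i - w) '' (T ×ˢ univ) := by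
  rintro c ⟨c', hc', hnear⟩
  refine ⟨(c', fun i => ⟨c i + w - c' i, by have := hnear i; omega⟩), ⟨hc', mem_univ _⟩, ?_⟩
  funext i
  have := hnear i
  dsimp only
  omega

lemma Set.Finite.natNbhd [Finite ι] (hT : T.Finite) : (natNbhd w T).Finite :=
  ((hT.prod finite_univ).image _).subset (natNbhd_subset_image w T)

lemma ncard_natNbhd_le [Finite ι] (hT : T.Finite) :
    (natNbhd w T).ncard ≤ (2 * w + 1) ^ Nat.card ι * T.ncard :=
  calc (natNbhd w T).ncard ≤ (T ×ˢ (univ : Set (ι → Fin (2 * w + 1)))).ncard :=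
        (ncard_le_ncard (natNbhd_subset_image w T) ((hT.prod finite_univ).image _)).trans
          (ncard_image_le (hT.prod finite_univ))
    _ = (2 * w + 1) ^ Nat.card ι * T.ncard := by
        rw [ncard_prod, ncard_univ, Nat.card_fun, Nat.card_fin, mul_comm]

end NatNbhd

section Cube

variable {d : ℕ}

lemma cubeIco_subset_cubeIcc (d : ℕ) : cubeIco d ⊆ cubeIcc d :=
  pi_mono fun _ _ => Ico_subset_Icc_self

lemma cons_mem_cubeIcc {s : ℝ} {x : Fin d → ℝ} (hs : s ∈ Icc 0 1) (hx : x ∈ cubeIcc d) :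
    (Fin.cons s x : Fin (d + 1) → ℝ) ∈ cubeIcc (d + 1) := fun i _ => by
  cases i using Fin.cases with
  | zero => simpa using hs
  | succ i => simpa using hx i (mem_univ i)

lemma cons_mem_cubeIco {s : ℝ} {x : Fin d → ℝ} (hs : s ∈ Ico 0 1) (hx : x ∈ cubeIco d) :
    (Fin.cons s x : Fin (d + 1) → ℝ) ∈ cubeIco (d + 1) := fun i _ => by
  cases i using Fin.cases with
  | zero => simpa using hs
  | succ i => simpa using hx i (mem_univ i)

lemma tail_mem_cubeIcc {x : Fin (d + 1) → ℝ} (hx : x ∈ cubeIcc (d + 1)) :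
    Fin.tail x ∈ cubeIcc d := fun i _ => hx i.succ (mem_univ _)

lemma tail_mem_cubeIco {x : Fin (d + 1) → ℝ} (hx : x ∈ cubeIco (d + 1)) :
    Fin.tail x ∈ cubeIco d := fun i _ => hx i.succ (mem_univ _)

lemma image_tail_subset_cubeIco {S : Set (Fin (d + 1) → ℝ)} (hS : S ⊆ cubeIco (d + 1)) :
    Fin.tail '' S ⊆ cubeIco d := by
  rintro _ ⟨x, hx, rfl⟩
  exact tail_mem_cubeIco (hS hx)

lemma IsGoodBox.clBox_subset_cubeIco {a b : Fin d → ℝ} (hab : IsGoodBox a b) :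
    clBox a b ⊆ cubeIco d := fun _ hx i _ =>
  ⟨(hab i).1.trans (hx i (mem_univ i)).1, (hx i (mem_univ i)).2.trans_lt (hab i).2.2⟩

lemma isClosed_clBox (a b : Fin d → ℝ) : IsClosed (clBox a b) :=
  isClosed_set_pi fun _ _ => isClosed_Icc

lemma frontier_clBox_subset (a b : Fin d → ℝ) :
    frontier (clBox a b) ⊆ ⋃ j, (clBox a b ∩ {x | x j = a j} ∪ clBox a b ∩ {x | x j = b j}) := by
  intro x hx
  have hxB : x ∈ clBox a b := (isClosed_clBox a b).frontier_subset hx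
  have hxI : x ∉ interior (clBox a b) := hx.2
  rw [clBox, interior_pi_set finite_univ] at hxI
  simp only [interior_Icc, mem_univ_pi, mem_Ioo, not_forall] at hxI
  obtain ⟨j, hj⟩ := hxI
  obtain ⟨hja, hjb⟩ := hxB j (mem_univ j)
  refine mem_iUnion.2 ⟨j, ?_⟩
  rcases hja.lt_or_eq with h | h
  · exact Or.inr ⟨hxB, le_antisymm hjb (not_lt.1 fun h' => hj ⟨h, h'⟩)⟩
  · exact Or.inl ⟨hxB, h.symm⟩

end Cube

def cellsAlong (d β L : ℕ) (i : Fin d) : ℕ := L ^ β ^ (d - 1 - (i : ℕ))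

def cellIndex (β L : ℕ) {d : ℕ} (y : Fin d → ℝ) : Fin d → ℕ :=
  fun i => ⌊y i * cellsAlong d β L i⌋₊

section CellIndex

variable {d β L : ℕ}

lemma cellsAlong_pos (hL : 0 < L) (i : Fin d) : 0 < cellsAlong d β L i := pow_pos hL _

@[simp] lemma cellsAlong_zero : cellsAlong (d + 1) β L 0 = L ^ β ^ d := by simp [cellsAlong]

@[simp] lemma cellsAlong_succ (i : Fin d) : cellsAlong (d + 1) β L i.succ = cellsAlong d β L i := by
  simp only [cellsAlong, Fin.val_succ]
  congr 2
  omega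

lemma cellsAlong_le_rpow {κ : ℝ} (hL : 1 ≤ L) (hβκ : 1 ≤ β * κ) (i : Fin d) :
    (cellsAlong d β L i : ℝ) ≤ ((L : ℝ) ^ β ^ d) ^ κ := by
  have hβ : (1 : ℝ) ≤ β := by exact_mod_cast one_le_of_one_le_natCast_mul hβκ
  have hκ : 0 ≤ κ := (pos_of_one_le_natCast_mul hβκ).le
  have hL' : (1 : ℝ) ≤ L := by exact_mod_cast hL
  rw [cellsAlong, Nat.cast_pow, ← Real.rpow_natCast, ← Real.rpow_natCast,
    ← Real.rpow_mul (by positivity)]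
  apply Real.rpow_le_rpow_of_exponent_le hL'
  push_cast
  calc (β : ℝ) ^ (d - 1 - (i : ℕ)) ≤ (β : ℝ) ^ (d - 1 - (i : ℕ)) * (β * κ) :=
        le_mul_of_one_le_right (by positivity) hβκ
    _ = (β : ℝ) ^ (d - 1 - (i : ℕ) + 1) * κ := by ring
    _ ≤ (β : ℝ) ^ d * κ := by gcongr; omega

lemma tail_cellIndex (y : Fin (d + 1) → ℝ) :
    Fin.tail (cellIndex β L y) = cellIndex β L (Fin.tail y) := by
  funext i
  simp [cellIndex, Fin.tail]

lemma cellIndex_le_cellIndex {y y' : Fin d → ℝ} {i : Fin d} (h : y i ≤ y' i) :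
    cellIndex β L y i ≤ cellIndex β L y' i :=
  Nat.floor_le_floor (by gcongr)

lemma eq_cellIndex_of_mem_anisoCell (hL : 0 < L) {cc : Fin d → ℕ} {y : Fin d → ℝ}
    (hy : y ∈ anisoCell d β L cc) : cellIndex β L y = cc := by
  funext i
  have hs : (0 : ℝ) < cellsAlong d β L i := by exact_mod_cast cellsAlong_pos hL i
  obtain ⟨h₁, h₂⟩ := hy i (mem_univ i)
  have e : (L : ℝ) ^ β ^ (d - 1 - (i : ℕ)) = cellsAlong d β L i := by simp [cellsAlong]
  rw [e, ← div_eq_mul_inv, div_le_iff₀ hs] at h₁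
  rw [e, ← div_eq_mul_inv, lt_div_iff₀ hs] at h₂
  exact (Nat.floor_eq_iff ((Nat.cast_nonneg _).trans h₁)).2 ⟨h₁, h₂⟩

lemma setOf_anisoCell_inter_nonempty_subset (hL : 0 < L) (Y : Set (Fin d → ℝ)) :
    {cc | (anisoCell d β L cc ∩ Y).Nonempty} ⊆ cellIndex β L '' Y := by
  rintro cc ⟨y, hy, hyY⟩
  exact ⟨y, hyY, eq_cellIndex_of_mem_anisoCell hL hy⟩

lemma cellIndex_lt_cellsAlong (hL : 0 < L) {y : Fin d → ℝ} (hy : y ∈ cubeIco d) (i : Fin d) :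
    cellIndex β L y i < cellsAlong d β L i := by
  obtain ⟨h₀, h₁⟩ := hy i (mem_univ i)
  have hs : (0 : ℝ) < cellsAlong d β L i := by exact_mod_cast cellsAlong_pos hL i
  exact (Nat.floor_lt (by positivity)).2 (by nlinarith)

lemma cellIndex_image_subset_piFinset (hL : 0 < L) {Y : Set (Fin d → ℝ)} (hY : Y ⊆ cubeIco d) :
    cellIndex β L '' Y ⊆ Fintype.piFinset fun i => Finset.range (cellsAlong d β L i) := by
  rintro _ ⟨y, hy, rfl⟩
  simpa using cellIndex_lt_cellsAlong hL (hY hy)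

lemma finite_cellIndex_image (hL : 0 < L) {Y : Set (Fin d → ℝ)} (hY : Y ⊆ cubeIco d) :
    (cellIndex β L '' Y).Finite :=
  (Finset.finite_toSet _).subset (cellIndex_image_subset_piFinset hL hY)

lemma ncard_cellIndex_image_le (hL : 0 < L) {Y : Set (Fin d → ℝ)} (hY : Y ⊆ cubeIco d) :
    (cellIndex β L '' Y).ncard ≤ L ^ ∑ i ∈ Finset.range d, β ^ i := by
  calc (cellIndex β L '' Y).ncard
      ≤ (Fintype.piFinset fun i => Finset.range (cellsAlong d β L i)).card := by
        rw [← ncard_coe_finset]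
        exact ncard_le_ncard (cellIndex_image_subset_piFinset hL hY) (Finset.finite_toSet _)
    _ = L ^ ∑ i ∈ Finset.range d, β ^ i := by
        rw [Fintype.card_piFinset]
        simp only [Finset.card_range, cellsAlong, Finset.prod_pow_eq_pow_sum]
        rw [Fin.sum_univ_eq_sum_range (fun k => β ^ (d - 1 - k)), Finset.sum_range_reflect]

lemma cellIndex_mem_natNbhd {C : ℝ} {y y' : Fin d → ℝ} {Y : Set (Fin d → ℝ)}
    (hy' : y' ∈ Y) (h : ∀ i, |y i - y' i| * cellsAlong d β L i ≤ C) :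
    cellIndex β L y ∈ natNbhd ⌈C⌉₊ (cellIndex β L '' Y) := by
  refine ⟨cellIndex β L y', mem_image_of_mem _ hy', fun i => ⟨?_, ?_⟩⟩ <;>
    refine Nat.floor_le_floor_add_ceil ?_
  · nlinarith [le_abs_self (y i - y' i), h i, (Nat.cast_nonneg (cellsAlong d β L i) : (0:ℝ) ≤ _)]
  · nlinarith [neg_abs_le (y i - y' i), h i, (Nat.cast_nonneg (cellsAlong d β L i) : (0:ℝ) ≤ _)]

end CellIndex

-- `monotone` says at once that `F x i` depends only on `x 0, …, x i` and is nondecreasing in `x i`.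
structure IsHolderTriangular {d : ℕ} (κ C : ℝ) (F : (Fin d → ℝ) → Fin d → ℝ) : Prop where
  monotone : ∀ i, ∀ x ∈ cubeIcc d, ∀ y ∈ cubeIcc d, (∀ j < i, x j = y j) → x i ≤ y i →
    F x i ≤ F y i
  holder : ∀ x ∈ cubeIcc d, ∀ y ∈ cubeIcc d, ‖F x - F y‖ ≤ C * ‖x - y‖ ^ κ
  mapsTo : MapsTo F (cubeIco d) (cubeIco d)

lemma IsTriangular.isHolderTriangular {d : ℕ} {π : Measure (Fin d → ℝ)}
    {F : (Fin d → ℝ) → Fin d → ℝ} (hF : IsTriangular π F) {κ C : ℝ}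
    (hHolder : ∀ x ∈ cubeIcc d, ∀ y ∈ cubeIcc d, ‖F x - F y‖ ≤ C * ‖x - y‖ ^ κ) :
    IsHolderTriangular κ C F where
  monotone i x hx y hy hxy hi := by
    have hy' : F y i = F (Function.update x i (y i)) i := by
      refine hF.dep i _ _ fun j hj => ?_
      rcases hj.lt_or_eq with hj | rfl
      · rw [Function.update_of_ne hj.ne, hxy j hj]
      · rw [Function.update_self]
    rw [hy']
    conv_lhs => rw [← Function.update_eq_self i x]
    exact (hF.strictMono i x hx).monotoneOn (hx i (mem_univ i)) (hy i (mem_univ i)) hi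
  holder := hHolder
  mapsTo := hF.bijOn.mapsTo

def sliceMap {d : ℕ} (F : (Fin (d + 1) → ℝ) → Fin (d + 1) → ℝ) (s : ℝ) :
    (Fin d → ℝ) → Fin d → ℝ :=
  fun x => Fin.tail (F (Fin.cons s x))

namespace IsHolderTriangular

variable {d β L : ℕ} {κ C : ℝ}

lemma apply_eq {F : (Fin d → ℝ) → Fin d → ℝ} (hF : IsHolderTriangular κ C F) {i : Fin d}
    {x y : Fin d → ℝ} (hx : x ∈ cubeIcc d) (hy : y ∈ cubeIcc d) (hxy : ∀ j ≤ i, x j = y j) :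
    F x i = F y i :=
  le_antisymm (hF.monotone i x hx y hy (fun j hj => hxy j hj.le) (hxy i le_rfl).le)
    (hF.monotone i y hy x hx (fun j hj => (hxy j hj.le).symm) (hxy i le_rfl).ge)

variable {F : (Fin (d + 1) → ℝ) → Fin (d + 1) → ℝ}

lemma slice (hF : IsHolderTriangular κ C F) {s : ℝ} (hs : s ∈ Ico 0 1) :
    IsHolderTriangular κ C (sliceMap F s) where
  monotone i x hx y hy hxy hi := by
    have hs' : s ∈ Icc (0 : ℝ) 1 := Ico_subset_Icc_self hs
    refine hF.monotone i.succ _ (cons_mem_cubeIcc hs' hx) _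
      (cons_mem_cubeIcc hs' hy) (fun j hj => ?_) (by simpa using hi)
    cases j using Fin.cases with
    | zero => rfl
    | succ j => simpa using hxy j (by simpa using hj)
  holder x hx y hy := by
    have hs' : s ∈ Icc (0 : ℝ) 1 := Ico_subset_Icc_self hs
    calc ‖sliceMap F s x - sliceMap F s y‖ ≤ ‖F (Fin.cons s x) - F (Fin.cons s y)‖ := by
          rw [sliceMap, sliceMap, ← Fin.tail_sub]
          exact Fin.norm_tail_le _
      _ ≤ C * ‖x - y‖ ^ κ := by
          simpa [Fin.norm_cons_sub_cons] using
            hF.holder _ (cons_mem_cubeIcc hs' hx) _ (cons_mem_cubeIcc hs' hy)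
  mapsTo x hx := tail_mem_cubeIco (hF.mapsTo (cons_mem_cubeIco hs hx))

lemma norm_tail_sub_sliceMap_le (hF : IsHolderTriangular κ C F) (hκ : 0 ≤ κ) (hC : 0 ≤ C)
    {x : Fin (d + 1) → ℝ} (hx : x ∈ cubeIcc (d + 1)) {s δ : ℝ} (hs : s ∈ Icc 0 1)
    (hxs : |x 0 - s| ≤ δ) :
    ‖Fin.tail (F x) - sliceMap F s (Fin.tail x)‖ ≤ C * δ ^ κ := by
  have hdist : ‖x - Fin.cons s (Fin.tail x)‖ ≤ δ :=
    Fin.norm_le_of_norm_zero_le_of_norm_tail_le (by simpa using hxs)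
      (by rw [Fin.tail_sub, Fin.tail_cons, sub_self, norm_zero]; exact (abs_nonneg _).trans hxs)
  calc ‖Fin.tail (F x) - sliceMap F s (Fin.tail x)‖ ≤ ‖F x - F (Fin.cons s (Fin.tail x))‖ := by
        rw [sliceMap, ← Fin.tail_sub]
        exact Fin.norm_tail_le _
    _ ≤ C * ‖x - Fin.cons s (Fin.tail x)‖ ^ κ :=
        hF.holder x hx _ (cons_mem_cubeIcc hs (tail_mem_cubeIcc hx))
    _ ≤ C * δ ^ κ := by gcongr

lemma ncard_cellIndex_image_le_of_forall_zero_eq (hF : IsHolderTriangular κ C F) (hL : 0 < L)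
    {S : Set (Fin (d + 1) → ℝ)} (hS : S ⊆ cubeIco (d + 1)) {t : ℝ} (hSt : ∀ x ∈ S, x 0 = t) :
    (cellIndex β L '' (F '' S)).ncard ≤ L ^ ∑ i ∈ Finset.range d, β ^ i := by
  set A := (fun x => cellIndex β L (F x) 0) '' S
  have hA : A.Subsingleton := by
    rintro _ ⟨x, hx, rfl⟩ _ ⟨y, hy, rfl⟩
    have hxy : F x 0 = F y 0 := hF.apply_eq (cubeIco_subset_cubeIcc _ (hS hx))
      (cubeIco_subset_cubeIcc _ (hS hy)) fun j hj => by
        rw [Fin.le_zero_iff.1 hj, hSt x hx, hSt y hy]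
    simp only [cellIndex, hxy]
  have hB := finite_cellIndex_image (β := β) hL (subset_refl (cubeIco d))
  have hsub : cellIndex β L '' (F '' S) ⊆ image2 Fin.cons A (cellIndex β L '' cubeIco d) := by
    rintro _ ⟨_, ⟨x, hx, rfl⟩, rfl⟩
    rw [← Fin.cons_self_tail (cellIndex β L (F x)), tail_cellIndex]
    exact mem_image2_of_mem (mem_image_of_mem _ hx)
      (mem_image_of_mem _ (tail_mem_cubeIco (hF.mapsTo (hS hx))))
  calc (cellIndex β L '' (F '' S)).ncard
      ≤ (image2 Fin.cons A (cellIndex β L '' cubeIco d)).ncard :=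
        ncard_le_ncard hsub (hA.finite.image2 _ hB)
    _ ≤ A.ncard * (cellIndex β L '' cubeIco d).ncard := ncard_image2_le hA.finite hB
    _ ≤ 1 * L ^ ∑ i ∈ Finset.range d, β ^ i :=
        Nat.mul_le_mul ((ncard_le_one_iff hA.finite).2 fun ha hb => hA ha hb)
          (ncard_cellIndex_image_le hL subset_rfl)
    _ = L ^ ∑ i ∈ Finset.range d, β ^ i := one_mul _

lemma cellIndex_zero_mem_Icc (hF : IsHolderTriangular κ C F) (hL : 0 < L) {x : Fin (d + 1) → ℝ}
    (hx : x ∈ cubeIco (d + 1)) {s s' : ℝ} (hs : s ∈ Icc 0 1) (hs' : s' ∈ Icc 0 1)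
    (hsx : s ≤ x 0) (hxs : x 0 ≤ s') :
    cellIndex β L (F x) 0 ∈ Icc (min (cellIndex β L (F fun _ => s) 0) (L ^ β ^ d))
      (min (cellIndex β L (F fun _ => s') 0) (L ^ β ^ d)) := by
  have hx' := cubeIco_subset_cubeIcc _ hx
  have hlt : cellIndex β L (F x) 0 < L ^ β ^ d := by
    simpa using cellIndex_lt_cellsAlong hL (hF.mapsTo hx) 0
  refine ⟨(min_le_left _ _).trans (cellIndex_le_cellIndex ?_),
    le_min (cellIndex_le_cellIndex ?_) hlt.le⟩
  · exact hF.monotone 0 _ (fun _ _ => hs) x hx' (fun j hj => absurd hj (Fin.not_lt_zero j)) hsx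
  · exact hF.monotone 0 x hx' _ (fun _ _ => hs') (fun j hj => absurd hj (Fin.not_lt_zero j)) hxs

lemma tail_cellIndex_mem_natNbhd (hF : IsHolderTriangular κ C F) (hC : 0 ≤ C)
    (hβκ : 1 ≤ β * κ) (hL : 1 ≤ L) {S : Set (Fin (d + 1) → ℝ)} (hS : S ⊆ cubeIco (d + 1))
    {x : Fin (d + 1) → ℝ} (hx : x ∈ S) {s : ℝ} (hs : s ∈ Icc 0 1)
    (hxs : |x 0 - s| ≤ ((L : ℝ) ^ β ^ d)⁻¹) :
    Fin.tail (cellIndex β L (F x)) ∈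
      natNbhd ⌈C⌉₊ (cellIndex β L '' (sliceMap F s '' (Fin.tail '' S))) := by
  have hN : (0 : ℝ) < (L : ℝ) ^ β ^ d := by positivity
  have hnorm := hF.norm_tail_sub_sliceMap_le (pos_of_one_le_natCast_mul hβκ).le hC
    (cubeIco_subset_cubeIcc _ (hS hx)) hs hxs
  rw [tail_cellIndex]
  refine cellIndex_mem_natNbhd (mem_image_of_mem _ (mem_image_of_mem _ hx)) fun i => ?_
  calc |Fin.tail (F x) i - sliceMap F s (Fin.tail x) i| * cellsAlong d β L i
      ≤ (C * ((L : ℝ) ^ β ^ d)⁻¹ ^ κ) * ((L : ℝ) ^ β ^ d) ^ κ := by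
        gcongr
        · exact (norm_le_pi_norm (Fin.tail (F x) - sliceMap F s (Fin.tail x)) i).trans hnorm
        · exact cellsAlong_le_rpow hL hβκ i
    _ = C := by
        rw [Real.inv_rpow hN.le, mul_assoc, inv_mul_cancel₀ (by positivity), mul_one]
lemma ncard_cellIndex_image_le_of_slices (hF : IsHolderTriangular κ C F) (hC : 0 ≤ C)
    (hβκ : 1 ≤ β * κ) (hL : 1 ≤ L) {S : Set (Fin (d + 1) → ℝ)} (hS : S ⊆ cubeIco (d + 1))
    {K : ℕ} (hK : ∀ s ∈ Ico (0 : ℝ) 1,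
      (cellIndex β L '' (sliceMap F s '' (Fin.tail '' S))).ncard ≤ K) :
    (cellIndex β L '' (F '' S)).ncard ≤ 2 * L ^ β ^ d * ((2 * ⌈C⌉₊ + 1) ^ d * K) := by
  set N := L ^ β ^ d with hN
  have hN0 : (0 : ℝ) < N := by positivity
  -- First cell index of `F` at the sample point `n / N`; the cap only matters at `n = N`,
  -- where the sample point leaves `cubeIco`.
  set m : ℕ → ℕ := fun n => min (cellIndex β L (F fun _ => (n : ℝ) / N) 0) N
  have hfin : ∀ n < N, (cellIndex β L '' (sliceMap F (n / N) '' (Fin.tail '' S))).Finite :=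
    fun n hn => finite_cellIndex_image (by omega) ((hF.slice (natCast_div_mem_Ico hn)).mapsTo
      |>.image_subset.trans' (image_mono (image_tail_subset_cubeIco hS)))
  have hmono : ∀ n < N, m n ≤ m (n + 1) := fun n hn =>
    min_le_min_right _ (cellIndex_le_cellIndex (hF.monotone 0 _
      (fun _ _ => natCast_div_mem_Icc hn.le) _ (fun _ _ => natCast_div_mem_Icc hn)
      (fun j hj => absurd hj (Fin.not_lt_zero j)) (by gcongr; linarith)))
  refine ncard_le_of_subset_biUnion_image2_Icc (f := fun k (c : Fin d → ℕ) => Fin.cons k c)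
    (B := fun n => natNbhd ⌈C⌉₊ (cellIndex β L '' (sliceMap F (n / N) '' (Fin.tail '' S))))
    (K := (2 * ⌈C⌉₊ + 1) ^ d * K) ?_ hmono (min_le_right _ _)
    (fun n hn => (hfin n hn).natNbhd _) fun n hn => (ncard_natNbhd_le _ (hfin n hn)).trans ?_
  · rintro _ ⟨_, ⟨x, hx, rfl⟩, rfl⟩
    obtain ⟨hx0, hx1⟩ := hS hx 0 (mem_univ _)
    set n := ⌊x 0 * N⌋₊
    have hn : n < N := (Nat.floor_lt (by positivity)).2 (by nlinarith)
    have hlo : (n : ℝ) / N ≤ x 0 := (div_le_iff₀ hN0).2 (Nat.floor_le (by positivity))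
    have hhi : x 0 ≤ ((n + 1 : ℕ) : ℝ) / N := by
      rw [le_div_iff₀ hN0]; push_cast; exact (Nat.lt_floor_add_one _).le
    refine mem_biUnion (Finset.mem_coe.2 (Finset.mem_range.2 hn)) ?_
    rw [← Fin.cons_self_tail (cellIndex β L (F x))]
    refine mem_image2_of_mem (hF.cellIndex_zero_mem_Icc (by omega) (hS hx)
      (natCast_div_mem_Icc hn.le) (natCast_div_mem_Icc hn) hlo hhi)
      (hF.tail_cellIndex_mem_natNbhd hC hβκ hL hS hx (natCast_div_mem_Icc hn.le) ?_)
    have hstep : ((n + 1 : ℕ) : ℝ) / N = n / N + (N : ℝ)⁻¹ := by push_cast; ring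
    rw [show ((L : ℝ) ^ β ^ d) = N by simp [hN], abs_le]
    constructor <;> linarith
  · rw [Nat.card_fin]
    exact Nat.mul_le_mul le_rfl (hK _ (natCast_div_mem_Ico hn))

end IsHolderTriangular

theorem exists_ncard_cellIndex_image_le {κ C : ℝ} (hC : 0 ≤ C) {β : ℕ} (hβκ : 1 ≤ β * κ)
    (d : ℕ) : ∃ c : ℕ, ∀ L : ℕ, 1 ≤ L → ∀ F : (Fin d → ℝ) → Fin d → ℝ,
      IsHolderTriangular κ C F → ∀ S ⊆ cubeIco d, ∀ (j : Fin d) (t : ℝ), (∀ x ∈ S, x j = t) →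
        (cellIndex β L '' (F '' S)).ncard ≤ c * L ^ ((∑ i ∈ Finset.range d, β ^ i) - 1) := by
  induction d with
  | zero => exact ⟨0, fun _ _ _ _ _ _ j => j.elim0⟩
  | succ d ih =>
    obtain ⟨c, hc⟩ := ih
    refine ⟨1 + 2 * (2 * ⌈C⌉₊ + 1) ^ d * c, fun L hL F hF S hS j t hSt => ?_⟩
    have hβ := one_le_of_one_le_natCast_mul hβκ
    have hsum : ∑ i ∈ Finset.range (d + 1), β ^ i = ∑ i ∈ Finset.range d, β ^ i + β ^ d :=
      Finset.sum_range_succ _ _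
    have hβd : 1 ≤ β ^ d := Nat.one_le_pow _ _ hβ
    cases j using Fin.cases with
    | zero =>
      calc (cellIndex β L '' (F '' S)).ncard ≤ L ^ ∑ i ∈ Finset.range d, β ^ i :=
            hF.ncard_cellIndex_image_le_of_forall_zero_eq (by omega) hS hSt
        _ ≤ L ^ ((∑ i ∈ Finset.range (d + 1), β ^ i) - 1) := Nat.pow_le_pow_right hL (by omega)
        _ ≤ _ := Nat.le_mul_of_pos_left _ (by omega)
    | succ j =>
      have hd : 1 ≤ ∑ i ∈ Finset.range d, β ^ i := by
        simpa using Finset.single_le_sum (fun i _ => Nat.zero_le (β ^ i))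
          (Finset.mem_range.2 j.pos)
      have hK : ∀ s ∈ Ico (0 : ℝ) 1, (cellIndex β L '' (sliceMap F s '' (Fin.tail '' S))).ncard ≤
          c * L ^ ((∑ i ∈ Finset.range d, β ^ i) - 1) := fun s hs =>
        hc L hL _ (hF.slice hs) _ (image_tail_subset_cubeIco hS) j t (by
          rintro _ ⟨x, hx, rfl⟩
          exact hSt x hx)
      calc (cellIndex β L '' (F '' S)).ncard
          ≤ 2 * L ^ β ^ d * ((2 * ⌈C⌉₊ + 1) ^ d * (c * L ^ ((∑ i ∈ Finset.range d, β ^ i) - 1))) :=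
            hF.ncard_cellIndex_image_le_of_slices hC hβκ hL hS hK
        _ = 2 * (2 * ⌈C⌉₊ + 1) ^ d * c * L ^ ((∑ i ∈ Finset.range (d + 1), β ^ i) - 1) := by
            rw [show (∑ i ∈ Finset.range (d + 1), β ^ i) - 1 =
              β ^ d + ((∑ i ∈ Finset.range d, β ^ i) - 1) by omega, pow_add]
            ring
        _ ≤ _ := by gcongr; omega

lemma IsHolderTriangular.ncard_cellIndex_image_frontier_le {d β L : ℕ} {κ C : ℝ}
    {F : (Fin d → ℝ) → Fin d → ℝ} (hF : IsHolderTriangular κ C F) (hL : 0 < L)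
    {a b : Fin d → ℝ} (hab : IsGoodBox a b) {K : ℕ}
    (hK : ∀ j t, (cellIndex β L '' (F '' (clBox a b ∩ {x | x j = t}))).ncard ≤ K) :
    (cellIndex β L '' (F '' frontier (clBox a b))).ncard ≤ 2 * d * K := by
  have hfaces : (⋃ j, (clBox a b ∩ {x | x j = a j} ∪ clBox a b ∩ {x | x j = b j})) ⊆ cubeIco d :=
    iUnion_subset fun j => union_subset (inter_subset_left.trans hab.clBox_subset_cubeIco)
      (inter_subset_left.trans hab.clBox_subset_cubeIco)
  calc (cellIndex β L '' (F '' frontier (clBox a b))).ncard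
      ≤ (cellIndex β L '' (F '' ⋃ j,
          (clBox a b ∩ {x | x j = a j} ∪ clBox a b ∩ {x | x j = b j}))).ncard :=
        ncard_le_ncard (image_mono (image_mono (frontier_clBox_subset a b)))
          (finite_cellIndex_image hL (hF.mapsTo.image_subset.trans' (image_mono hfaces)))
    _ ≤ ∑ j, ((cellIndex β L '' (F '' (clBox a b ∩ {x | x j = a j}))).ncard +
          (cellIndex β L '' (F '' (clBox a b ∩ {x | x j = b j}))).ncard) := by
        simp only [image_iUnion, image_union]
        exact (ncard_iUnion_le_of_fintype _).trans
          (Finset.sum_le_sum fun j _ => ncard_union_le _ _)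
    _ ≤ ∑ _j : Fin d, (K + K) := Finset.sum_le_sum fun j _ => add_le_add (hK _ _) (hK _ _)
    _ = 2 * d * K := by simp; ring

theorem boundary_image_cell_count_general
    {d : ℕ}
    (π : Measure (Fin d → ℝ))
    (F : (Fin d → ℝ) → (Fin d → ℝ)) (hF : IsTriangular π F)
    (κ : ℝ) (hκ : κ ∈ Set.Ioc (0 : ℝ) 1)
    (C : ℝ) (hC : 0 ≤ C)
    (hHolder : ∀ x ∈ cubeIcc d, ∀ y ∈ cubeIcc d, ‖F x - F y‖ ≤ C * ‖x - y‖ ^ κ) :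
    ∃ c : ℝ, 0 < c ∧ ∀ (L : ℕ), 2 ≤ L → ∀ a b : Fin d → ℝ, IsGoodBox a b →
      ({cc : Fin d → ℕ | (∀ i : Fin d, cc i < L ^ (⌈κ⁻¹⌉₊ ^ (d - 1 - (i : ℕ)))) ∧
          (anisoCell d ⌈κ⁻¹⌉₊ L cc ∩ F '' frontier (clBox a b)).Nonempty}.ncard : ℝ) ≤
        c * (L : ℝ) ^ ((∑ i ∈ Finset.range d, ⌈κ⁻¹⌉₊ ^ i) - 1) := by
  have hβκ : 1 ≤ (⌈κ⁻¹⌉₊ : ℝ) * κ :=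
    calc (1 : ℝ) = κ⁻¹ * κ := (inv_mul_cancel₀ hκ.1.ne').symm
      _ ≤ ⌈κ⁻¹⌉₊ * κ := by gcongr; exacts [hκ.1.le, Nat.le_ceil _]
  obtain ⟨c, hc⟩ := exists_ncard_cellIndex_image_le hC hβκ d
  refine ⟨2 * d * c + 1, by positivity, fun L hL a b hab => ?_⟩
  have hF' := hF.isHolderTriangular hHolder
  have hY : F '' frontier (clBox a b) ⊆ cubeIco d := hF'.mapsTo.image_subset.trans'
    (image_mono ((isClosed_clBox a b).frontier_subset.trans hab.clBox_subset_cubeIco))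
  set e := (∑ i ∈ Finset.range d, ⌈κ⁻¹⌉₊ ^ i) - 1
  calc _ ≤ ((cellIndex ⌈κ⁻¹⌉₊ L '' (F '' frontier (clBox a b))).ncard : ℝ) := by
        refine Nat.cast_le.2 (ncard_le_ncard ?_ (finite_cellIndex_image (by omega) hY))
        exact fun _ h => setOf_anisoCell_inter_nonempty_subset (by omega) _ h.2
    _ ≤ ((2 * d * (c * L ^ e) : ℕ) : ℝ) := by
        exact_mod_cast hF'.ncard_cellIndex_image_frontier_le (by omega) hab fun j t =>
          hc L (by omega) F hF' _ (inter_subset_left.trans hab.clBox_subset_cubeIco) j t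
            fun _ hx => hx.2
    _ ≤ (2 * d * c + 1) * (L : ℝ) ^ e := by
        push_cast
        nlinarith [pow_nonneg (Nat.cast_nonneg L : (0 : ℝ) ≤ L) e]

/-- the central geometric estimate in the proof of Theorem 3:
for a triangular transform `F` of `π` which is `κ`-Hölder and whose conditional CDFs are
`M`-Lipschitz in the last variable, with `β = ⌈κ⁻¹⌉` and `d̃ = ∑_{i=0}^{d−1} β^i`, there is
a constant `c > 0` such that for every `L ≥ 2` and every box `B` with `0 ≤ aᵢ < bᵢ < 1`,
the image `F(∂B)` of the boundary of `B` meets at most `c L^{d̃−1}` of the `L^{d̃}` cells of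
the anisotropic partition of `[0,1)^d` with `i`-th side length `L^{-β^{d−i}}`. -/
theorem boundary_image_cell_count
    {d : ℕ} (hd : 1 ≤ d)
    (π : Measure (Fin d → ℝ)) [IsProbabilityMeasure π] (hπc : π (cubeIcc d) = 1)
    (F : (Fin d → ℝ) → (Fin d → ℝ)) (hF : IsTriangular π F)
    (κ : ℝ) (hκ : κ ∈ Set.Ioc (0 : ℝ) 1)
    (C : ℝ) (hC : 0 ≤ C)
    (hHolder : ∀ x ∈ cubeIcc d, ∀ y ∈ cubeIcc d, ‖F x - F y‖ ≤ C * ‖x - y‖ ^ κ)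
    (M : ℝ)
    (hLip : ∀ (i : Fin d), ∀ x ∈ cubeIcc d, ∀ x' ∈ cubeIcc d,
      (∀ j, j ≠ i → x j = x' j) → |F x i - F x' i| ≤ M * |x i - x' i|) :
    ∃ c : ℝ, 0 < c ∧ ∀ (L : ℕ), 2 ≤ L → ∀ a b : Fin d → ℝ, IsGoodBox a b →
      ({cc : Fin d → ℕ | (∀ i : Fin d, cc i < L ^ (⌈κ⁻¹⌉₊ ^ (d - 1 - (i : ℕ)))) ∧
          (anisoCell d ⌈κ⁻¹⌉₊ L cc ∩ F '' frontier (clBox a b)).Nonempty}.ncard : ℝ) ≤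
        c * (L : ℝ) ^ ((∑ i ∈ Finset.range d, ⌈κ⁻¹⌉₊ ^ i) - 1) :=
  boundary_image_cell_count_general π F hF κ hκ C hC hHolder
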